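/- arXiv:1401.5384 — 2 statements merged into one kernel-verified Lean document; each statement's English description precedes it below -/
import Mathlib

section
/- There exists a nonzero p ∈ 𝕊 with h(p) ≤ N; consequently the minimal height of nonzero elements of 𝕊 is at most N, i.e., any nonzero element of 𝕊 of minimal height has height ≤ N. -/
/-!
The vector monomials `X ^ (m / n)` placed in entry `m % n`, for `0 ≤ m ≤ N`, are linearly
independent and have heights `0, …, N`; since vector polynomials of height `≤ N` form a subspace,
they span an `(N + 1)`-dimensional space of such. The `N` interpolation conditions are linear functionals, hence
vanish simultaneously on a nonzero element of that space; a solution of minimal height is no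
higher than this one.
-/

open Polynomial

/-- The height of an `n`-dimensional vector polynomial `p = (P_1, ..., P_n)`:
`h(p) = max (n * deg P_j + j - 1)` over `1 <= j <= n`, taken in `Z union {-infty}`,
with `deg 0 = -infty` and `h(0) = -infty`.  (Entries are indexed by `j : Fin n`,
so `j.val` plays the role of `j - 1`.) -/
noncomputable def height (n : ℕ) (p : Fin n → ℂ[X]) : WithBot ℤ :=
  Finset.univ.sup fun j => if p j = 0 then (⊥ : WithBot ℤ)
    else (((n * (p j).natDegree + j.val : ℕ) : ℤ) : WithBot ℤ)

/-- The solution set `S` of the interpolation problem: all vector polynomials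
`p` such that the linear combination of the entries evaluated at the node `z j`
with coefficients `α j` vanishes, for every node `j`. -/
def Sol (n N : ℕ) (z : Fin N → ℂ) (α : Fin N → Fin n → ℂ) : Set (Fin n → ℂ[X]) :=
  {p | ∀ j : Fin N, ∑ k : Fin n, α j k * (p k).eval (z j) = 0}

open Module

section Height

variable {n : ℕ}

theorem height_le_iff {p : Fin n → ℂ[X]} {b : WithBot ℤ} :
    height n p ≤ b ↔
      ∀ j, p j ≠ 0 → (((n * (p j).natDegree + j.val : ℕ) : ℤ) : WithBot ℤ) ≤ b := by
  simp only [height, Finset.sup_le_iff, Finset.mem_univ, true_implies]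
  refine forall_congr' fun j => ?_
  by_cases hj : p j = 0 <;> simp [hj]

theorem le_height {p : Fin n → ℂ[X]} {j : Fin n} (hj : p j ≠ 0) :
    (((n * (p j).natDegree + j.val : ℕ) : ℤ) : WithBot ℤ) ≤ height n p :=
  height_le_iff.mp le_rfl j hj

theorem height_add_le (p q : Fin n → ℂ[X]) :
    height n (p + q) ≤ max (height n p) (height n q) := by
  refine height_le_iff.mpr fun j hj => ?_
  by_cases hp : p j = 0
  · simpa [hp] using le_max_of_le_right (le_height (p := q) (by simpa [hp] using hj))
  by_cases hq : q j = 0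
  · simpa [hq] using le_max_of_le_left (le_height (p := p) (by simpa [hq] using hj))
  refine le_trans ?_ (max_le_max (le_height hp) (le_height hq))
  rw [← WithBot.coe_max, ← Nat.cast_max, WithBot.coe_le_coe, Nat.cast_le, le_max_iff]
  rcases le_max_iff.mp (natDegree_add_le (p j) (q j)) with h | h
  · exact Or.inl (by gcongr; exact h)
  · exact Or.inr (by gcongr; exact h)

theorem height_smul_le (c : ℂ) (p : Fin n → ℂ[X]) : height n (c • p) ≤ height n p := by
  refine height_le_iff.mpr fun j hj => ?_
  have hpj : p j ≠ 0 := fun h => hj (by simp [h])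
  refine le_trans ?_ (le_height hpj)
  have := natDegree_smul_le c (p j)
  rw [WithBot.coe_le_coe, Nat.cast_le, Pi.smul_apply]
  gcongr

variable (n) in
def heightLE (b : WithBot ℤ) : Submodule ℂ (Fin n → ℂ[X]) where
  carrier := {p | height n p ≤ b}
  zero_mem' := height_le_iff.mpr fun _ hj => (hj rfl).elim
  add_mem' hp hq := (height_add_le _ _).trans (max_le hp hq)
  smul_mem' c _ hp := (height_smul_le c _).trans hp

end Height

section VecMonomial

variable {n : ℕ} [NeZero n]

variable (n) in
noncomputable def vecMonomial (m : ℕ) : Fin n → ℂ[X] :=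
  Pi.single (Fin.ofNat n m) (X ^ (m / n))

theorem height_vecMonomial (m : ℕ) : height n (vecMonomial n m) = ((m : ℤ) : WithBot ℤ) := by
  have hne : vecMonomial n m (Fin.ofNat n m) ≠ 0 := by
    simp only [vecMonomial, Pi.single_eq_same]
    exact pow_ne_zero _ X_ne_zero
  have hm : n * (vecMonomial n m (Fin.ofNat n m)).natDegree + (Fin.ofNat n m).val = m := by
    rw [vecMonomial, Pi.single_eq_same, natDegree_X_pow, Fin.val_ofNat, Nat.div_add_mod]
  refine le_antisymm (height_le_iff.mpr fun j hj => ?_) (by simpa only [hm] using le_height hne)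
  obtain rfl : j = Fin.ofNat n m := by
    by_contra h
    exact hj (Pi.single_eq_of_ne h _)
  rw [hm]

theorem linearIndependent_vecMonomial : LinearIndependent ℂ (vecMonomial n) := by
  let index : ℕ → Σ _ : Fin n, ℕ := fun m => ⟨Fin.ofNat n m, m / n⟩
  have hinj : Function.Injective index := by
    intro a b h
    simp only [index, Sigma.mk.injEq, heq_eq_eq, Fin.ext_iff, Fin.val_ofNat] at h
    rw [← Nat.div_add_mod a n, ← Nat.div_add_mod b n, h.1, h.2]
  have : vecMonomial n = Pi.basis (fun _ : Fin n => basisMonomials ℂ) ∘ index := by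
    ext m : 1
    simp [vecMonomial, index, X_pow_eq_monomial]
  rw [this]
  exact (Pi.basis fun _ : Fin n => basisMonomials ℂ).linearIndependent.comp _ hinj

end VecMonomial

theorem exists_ne_zero_mem_ker_height_le {n : ℕ} [NeZero n] {V : Type*} [AddCommGroup V]
    [Module ℂ V] [FiniteDimensional ℂ V] (f : (Fin n → ℂ[X]) →ₗ[ℂ] V) {N : ℕ}
    (hN : finrank ℂ V ≤ N) :
    ∃ p ∈ LinearMap.ker f, p ≠ 0 ∧ height n p ≤ ((N : ℤ) : WithBot ℤ) := by
  let W := Submodule.span ℂ (Set.range (vecMonomial n ∘ Fin.val : Fin (N + 1) → _))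
  have hW : finrank ℂ W = N + 1 :=
    (finrank_span_eq_card (linearIndependent_vecMonomial.comp _ Fin.val_injective)).trans
      (Fintype.card_fin _)
  have : FiniteDimensional ℂ W := .of_finrank_eq_succ hW
  have hW_le : W ≤ heightLE n N := Submodule.span_le.mpr <| Set.range_subset_iff.mpr fun m =>
    (height_vecMonomial m).trans_le (by exact_mod_cast m.is_le)
  obtain ⟨w, hw, hw0⟩ :=
    (Submodule.ne_bot_iff _).mp ((f.domRestrict W).ker_ne_bot_of_finrank_lt (by omega))
  exact ⟨w, hw, by simpa using hw0, hW_le w.2⟩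

noncomputable def interpolationMap {n N : ℕ} (z : Fin N → ℂ) (α : Fin N → Fin n → ℂ) :
    (Fin n → ℂ[X]) →ₗ[ℂ] (Fin N → ℂ) :=
  LinearMap.pi fun j => ∑ k, α j k • (leval (z j)).comp (LinearMap.proj k)

theorem Sol_eq_ker_interpolationMap {n N : ℕ} (z : Fin N → ℂ) (α : Fin N → Fin n → ℂ) :
    Sol n N z α = LinearMap.ker (interpolationMap z α) := by
  ext p
  simp [Sol, interpolationMap, funext_iff]

theorem stmt_12_general (n N : ℕ) (hn : 1 ≤ n)
    (z : Fin N → ℂ) (α : Fin N → Fin n → ℂ) :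
    (∃ p ∈ Sol n N z α, p ≠ 0 ∧ height n p ≤ ((N : ℤ) : WithBot ℤ)) ∧
      ∀ p ∈ Sol n N z α, p ≠ 0 →
        (∀ q ∈ Sol n N z α, q ≠ 0 → height n p ≤ height n q) →
        height n p ≤ ((N : ℤ) : WithBot ℤ) := by
  have : NeZero n := ⟨by omega⟩
  obtain ⟨q, hq, hq0, hqN⟩ :=
    exists_ne_zero_mem_ker_height_le (interpolationMap z α) (finrank_fin_fun ℂ).le
  rw [← SetLike.mem_coe, ← Sol_eq_ker_interpolationMap] at hq
  exact ⟨⟨q, hq, hq0, hqN⟩, fun p _ _ hmin => (hmin q hq hq0).trans hqN⟩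

/-- There exists a nonzero solution `p ∈ S` with `h(p) ≤ N`; consequently any
nonzero element of `S` of minimal height (a first generator) has height `≤ N`. -/
theorem stmt_12 (n N : ℕ) (hn : 1 ≤ n) (hN : 1 ≤ N)
    (z : Fin N → ℂ) (α : Fin N → Fin n → ℂ)
    (hα : ∀ j : Fin N, 0 < ∑ k : Fin n, ‖α j k‖) :
    (∃ p ∈ Sol n N z α, p ≠ 0 ∧ height n p ≤ ((N : ℤ) : WithBot ℤ)) ∧
      ∀ p ∈ Sol n N z α, p ≠ 0 →
        (∀ q ∈ Sol n N z α, q ≠ 0 → height n p ≤ height n q) →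
        height n p ≤ ((N : ℤ) : WithBot ℤ) :=
  stmt_12_general n N hn z α
end

section
/- Let n > 1 and let r_1,…,r_n be generators of 𝕊. Then the set of z ∈ ℂ for which the vectors r_1(z),…,r_n(z) ∈ ℂⁿ (obtained by evaluating every entry at z) are linearly independent is infinite. -/
open Polynomial

/-- `M(r_1) + ... + M(r_(j-1))`: the set of combinations of scalar-polynomial
multiples of the `r_l` with `l < j` (for `j = 0` this set is `{0}`). -/
def prevSet (n : ℕ) (r : Fin n → (Fin n → ℂ[X])) (j : Fin n) : Set (Fin n → ℂ[X]) :=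
  {q | ∃ S : Fin n → ℂ[X], q = ∑ l ∈ Finset.univ.filter (fun l => l < j), S l • r l}

/-- `r_1, ..., r_n` are generators of the solution set `S`: each `r_j` belongs
to `S \ (M(r_1) + ... + M(r_(j-1)))` and has minimal height among the elements
of that set.  (For `j = 1` this says that `r_1` is a nonzero element of `S` of
minimal height.) -/
def IsGenerators (n N : ℕ) (z : Fin N → ℂ) (α : Fin N → Fin n → ℂ)
    (r : Fin n → (Fin n → ℂ[X])) : Prop :=
  ∀ j : Fin n, r j ∈ Sol n N z α ∧ r j ∉ prevSet n r j ∧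
    ∀ q ∈ Sol n N z α, q ∉ prevSet n r j → height n (r j) ≤ height n q

/-!
Read `p = (P_1, …, P_n)` as the scalar polynomial `∑ X^(j-1) P_j(X^n)`: its entries live in
disjoint residue classes of exponents mod `n`, so `h(p)` is just its degree, and multiplying `p`
by `S` multiplies it by `S(X^n)`. If two generators `r_i`, `r_j` (`i < j`) had heights congruent
mod `n`, subtracting a monomial multiple of `r_i` from `r_j` would cancel the leading term and
give an element of `𝕊 \ (M(r_1) + ⋯ + M(r_(j-1)))` of smaller height than `r_j`. So the heights
are pairwise incongruent mod `n`; then leading terms never cancel in `∑ v_j r_j`, the `r_j` are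
independent over `ℂ[X]`, the determinant `det (r_j)_i` is a nonzero polynomial, and the evaluated
vectors are independent away from its finitely many roots.
-/

section Interleave

variable {R : Type*} [CommRing R] {n : ℕ}

noncomputable def interleave (n : ℕ) : (Fin n → R[X]) →+ R[X] where
  toFun p := ∑ j : Fin n, X ^ (j : ℕ) * expand R n (p j)
  map_zero' := by simp
  map_add' p q := by simp [mul_add, Finset.sum_add_distrib]

lemma interleave_apply (p : Fin n → R[X]) :
    interleave n p = ∑ j : Fin n, X ^ (j : ℕ) * expand R n (p j) := rfl

lemma interleave_smul (S : R[X]) (p : Fin n → R[X]) :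
    interleave n (S • p) = expand R n S * interleave n p := by
  simp only [interleave_apply, Pi.smul_apply, smul_eq_mul, map_mul, Finset.mul_sum]
  exact Finset.sum_congr rfl fun j _ => by ring

variable [IsDomain R]

lemma X_pow_mul_expand_ne_zero (j : Fin n) {P : R[X]} (hP : P ≠ 0) :
    X ^ (j : ℕ) * expand R n P ≠ 0 :=
  mul_ne_zero (pow_ne_zero _ X_ne_zero) ((expand_eq_zero j.pos).not.mpr hP)

lemma natDegree_X_pow_mul_expand (j : Fin n) {P : R[X]} (hP : P ≠ 0) :
    (X ^ (j : ℕ) * expand R n P).natDegree = n * P.natDegree + j := by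
  rw [natDegree_mul (pow_ne_zero _ X_ne_zero) ((expand_eq_zero j.pos).not.mpr hP),
    natDegree_X_pow, natDegree_expand]
  ring

lemma degree_interleave (p : Fin n → R[X]) :
    (interleave n p).degree
      = Finset.univ.sup fun j : Fin n => (X ^ (j : ℕ) * expand R n (p j)).degree := by
  rw [interleave_apply]
  refine degree_sum_eq_of_disjoint _ _ fun i hi j hj hij hdeg => hij ?_
  have hpi : p i ≠ 0 := fun h => hi.2 (by simp [h])
  have hpj : p j ≠ 0 := fun h => hj.2 (by simp [h])
  have h : (X ^ (i : ℕ) * expand R n (p i)).natDegree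
      = (X ^ (j : ℕ) * expand R n (p j)).natDegree := natDegree_eq_of_degree_eq hdeg
  rw [natDegree_X_pow_mul_expand _ hpi, natDegree_X_pow_mul_expand _ hpj] at h
  have hmod := congrArg (· % n) h
  simp only [Nat.mul_add_mod, Nat.mod_eq_of_lt i.isLt, Nat.mod_eq_of_lt j.isLt] at hmod
  exact Fin.ext hmod

lemma height_eq_map_degree_interleave (p : Fin n → ℂ[X]) :
    height n p = (interleave n p).degree.map ((↑) : ℕ → ℤ) := by
  rw [degree_interleave, Finset.apply_sup_eq_sup_comp (WithBot.map ((↑) : ℕ → ℤ))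
    (fun _ _ => Nat.mono_cast.withBot_map.map_sup _ _) rfl, height]
  refine Finset.sup_congr rfl fun j _ => ?_
  split_ifs with hj
  · simp [hj]
  · rw [Function.comp_apply, degree_eq_natDegree (X_pow_mul_expand_ne_zero j hj),
      natDegree_X_pow_mul_expand j hj]
    rfl

lemma height_le_height_iff {p q : Fin n → ℂ[X]} :
    height n p ≤ height n q ↔ (interleave n p).degree ≤ (interleave n q).degree := by
  simp only [height_eq_map_degree_interleave]
  exact WithBot.map_le_iff _ Nat.cast_le

lemma interleave_ne_zero {p : Fin n → R[X]} (hp : p ≠ 0) : interleave n p ≠ 0 := by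
  obtain ⟨j, hj⟩ := Function.ne_iff.mp hp
  rw [← degree_ne_bot, degree_interleave, ← bot_lt_iff_ne_bot]
  refine lt_of_lt_of_le ?_ (Finset.le_sup (Finset.mem_univ j))
  rw [degree_eq_natDegree (X_pow_mul_expand_ne_zero j hj)]
  exact WithBot.bot_lt_coe _

lemma linearIndependent_of_injective_natDegree_interleave_mod {ι : Type*} [Fintype ι]
    {r : ι → Fin n → R[X]} (hr : ∀ i, r i ≠ 0)
    (hinj : Function.Injective fun i => (interleave n (r i)).natDegree % n) :
    LinearIndependent R[X] r := by
  rw [Fintype.linearIndependent_iff]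
  intro g hg
  by_contra! ⟨i, hi⟩
  obtain ⟨j, -⟩ := Function.ne_iff.mp (hr i)
  have hsum : ∑ l, expand R n (g l) * interleave n (r l) = 0 := by
    simpa only [map_sum, interleave_smul, map_zero] using congrArg (interleave n) hg
  have hdeg := degree_sum_eq_of_disjoint (fun l => expand R n (g l) * interleave n (r l))
    Finset.univ ?_
  · rw [hsum, degree_zero, eq_comm, Finset.sup_eq_bot_iff] at hdeg
    exact mul_ne_zero ((expand_eq_zero j.pos).not.mpr hi) (interleave_ne_zero (hr i))
      (degree_eq_bot.mp (hdeg i (Finset.mem_univ i)))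
  intro k hk l hl hkl hdeg
  refine hkl (hinj ?_)
  obtain ⟨hgk, hrk⟩ := mul_ne_zero_iff.mp hk.2
  obtain ⟨hgl, hrl⟩ := mul_ne_zero_iff.mp hl.2
  have h := natDegree_eq_of_degree_eq (S := R) hdeg
  rw [natDegree_mul hgk hrk, natDegree_mul hgl hrl, natDegree_expand, natDegree_expand] at h
  simpa only [Nat.mul_add_mod'] using congrArg (· % n) h

end Interleave

lemma degree_sub_C_mul_X_pow_mul_lt {K : Type*} [Field K] {f g : K[X]} (hf : f ≠ 0) (hg : g ≠ 0)
    (h : g.natDegree ≤ f.natDegree) :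
    (f - C (f.leadingCoeff / g.leadingCoeff) * X ^ (f.natDegree - g.natDegree) * g).degree
      < f.degree := by
  have hc : f.leadingCoeff / g.leadingCoeff ≠ 0 := by simp [hf, hg]
  refine degree_sub_lt_left ?_ hf ?_
  · rw [degree_mul, degree_C_mul_X_pow _ hc, degree_eq_natDegree hf, degree_eq_natDegree hg]
    norm_cast
    omega
  · rw [leadingCoeff_mul, leadingCoeff_C_mul_X_pow,
      div_mul_cancel₀ _ (leadingCoeff_ne_zero.mpr hg)]

lemma det_ne_zero_of_linearIndependent_rows {R : Type*} [CommRing R] [IsDomain R] {m : Type*}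
    [Fintype m] [DecidableEq m] {A : Matrix m m R} (h : LinearIndependent R fun i => A i) :
    A.det ≠ 0 := by
  intro hdet
  obtain ⟨v, hv0, hv⟩ := Matrix.exists_vecMul_eq_zero_iff.mpr hdet
  refine hv0 (funext (Fintype.linearIndependent_iff.mp h v ?_))
  ext j
  simpa [Matrix.vecMul, dotProduct] using congrFun hv j

lemma finite_compl_setOf_linearIndependent_eval {K : Type*} [Field K] {m : Type*} [Fintype m]
    [DecidableEq m] {M : Matrix m m K[X]} (hM : M.det ≠ 0) :
    {w : K | LinearIndependent K fun j i => (M j i).eval w}ᶜ.Finite := by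
  refine (finite_setOfPred_isRoot hM).subset fun w hw => ?_
  by_contra hroot
  refine hw (Matrix.linearIndependent_rows_of_det_ne_zero (A := (evalRingHom w).mapMatrix M) ?_)
  rwa [← RingHom.map_det]

section Generators

variable {n N : ℕ} {z : Fin N → ℂ} {α : Fin N → Fin n → ℂ}

lemma sub_smul_mem_Sol {p q : Fin n → ℂ[X]} (hp : p ∈ Sol n N z α) (hq : q ∈ Sol n N z α)
    (S : ℂ[X]) : p - S • q ∈ Sol n N z α := by
  intro m
  simp only [Pi.sub_apply, Pi.smul_apply, smul_eq_mul, eval_sub, eval_mul, mul_sub,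
    Finset.sum_sub_distrib, mul_left_comm (α m _), ← Finset.mul_sum, hp m, hq m, mul_zero,
    sub_zero]

lemma prevSet_mono {r : Fin n → Fin n → ℂ[X]} {i j : Fin n} (hij : i ≤ j) :
    prevSet n r i ⊆ prevSet n r j := by
  rintro q ⟨S, rfl⟩
  refine ⟨fun l => if l < i then S l else 0, ?_⟩
  simp only [Finset.sum_filter]
  refine Finset.sum_congr rfl fun l _ => ?_
  split_ifs with hi hj
  · rfl
  · exact absurd (hi.trans_le hij) hj
  · rw [zero_smul]
  · rfl

lemma add_smul_mem_prevSet {r : Fin n → Fin n → ℂ[X]} {i j : Fin n} (hij : i < j)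
    {q : Fin n → ℂ[X]} (hq : q ∈ prevSet n r j) (S : ℂ[X]) :
    q + S • r i ∈ prevSet n r j := by
  obtain ⟨T, rfl⟩ := hq
  refine ⟨T + fun l => if l = i then S else 0, ?_⟩
  simp only [Pi.add_apply, add_smul, Finset.sum_add_distrib, ite_smul, zero_smul,
    Finset.sum_ite_eq', Finset.mem_filter, Finset.mem_univ, true_and, if_pos hij]

namespace IsGenerators

variable {r : Fin n → Fin n → ℂ[X]} (hr : IsGenerators n N z α r)
include hr

lemma ne_zero (j : Fin n) : r j ≠ 0 :=
  fun h => (hr j).2.1 ⟨0, by simp [h]⟩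

lemma height_mono : Monotone fun j => height n (r j) :=
  fun _ j hij => (hr _).2.2 (r j) (hr j).1 fun h => (hr j).2.1 (prevSet_mono hij h)

lemma injective_natDegree_interleave_mod :
    Function.Injective fun j => (interleave n (r j)).natDegree % n := by
  refine Function.Injective.of_lt_imp_ne fun i j hij hmod => ?_
  set f := interleave n (r j)
  set g := interleave n (r i)
  have hdeg : g.natDegree ≤ f.natDegree :=
    natDegree_le_natDegree (height_le_height_iff.mp (hr.height_mono hij.le))
  obtain ⟨m, hm⟩ := (Nat.modEq_iff_dvd' hdeg).mp hmod
  set S := C (f.leadingCoeff / g.leadingCoeff) * X ^ m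
  have hq : interleave n (r j - S • r i)
      = f - C (f.leadingCoeff / g.leadingCoeff) * X ^ (f.natDegree - g.natDegree) * g := by
    rw [map_sub, interleave_smul, hm, pow_mul]
    simp only [S, map_mul, expand_C, map_pow, expand_X]
    rfl
  have hlt : ¬ height n (r j) ≤ height n (r j - S • r i) := by
    rw [height_le_height_iff, hq, not_le]
    exact degree_sub_C_mul_X_pow_mul_lt (interleave_ne_zero (hr.ne_zero j))
      (interleave_ne_zero (hr.ne_zero i)) hdeg
  refine hlt ((hr j).2.2 _ (sub_smul_mem_Sol (hr j).1 (hr i).1 S) fun hmem => (hr j).2.1 ?_)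
  simpa using add_smul_mem_prevSet hij hmem S

lemma linearIndependent : LinearIndependent ℂ[X] r :=
  linearIndependent_of_injective_natDegree_interleave_mod hr.ne_zero
    hr.injective_natDegree_interleave_mod

end IsGenerators

end Generators

theorem stmt_16_general (n N : ℕ)
    (z : Fin N → ℂ) (α : Fin N → Fin n → ℂ)
    (r : Fin n → (Fin n → ℂ[X])) (hr : IsGenerators n N z α r) :
    {w : ℂ | LinearIndependent ℂ
      (fun j : Fin n => fun i : Fin n => (r j i).eval w)}.Infinite := by
  simpa only [compl_compl, Matrix.of_apply] using (finite_compl_setOf_linearIndependent_eval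
    (det_ne_zero_of_linearIndependent_rows (A := Matrix.of r) hr.linearIndependent)).infinite_compl

/-- For `n > 1`, the set of points `w ∈ ℂ` at which the evaluated generators
`r_1(w), ..., r_n(w) ∈ ℂ^n` are linearly independent is infinite. -/
theorem stmt_16 (n N : ℕ) (hn : 1 < n) (hN : 1 ≤ N)
    (z : Fin N → ℂ) (α : Fin N → Fin n → ℂ)
    (hα : ∀ j : Fin N, 0 < ∑ k : Fin n, ‖α j k‖)
    (r : Fin n → (Fin n → ℂ[X])) (hr : IsGenerators n N z α r) :
    {w : ℂ | LinearIndependent ℂ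
      (fun j : Fin n => fun i : Fin n => (r j i).eval w)}.Infinite :=
  stmt_16_general n N z α r hr
end
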